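/- arXiv:2102.08076 — 3 statements merged into one kernel-verified Lean document; each statement's English description precedes it below -/
import Mathlib

section
/- Let G be a graph with a forest decomposition into f rooted forests and let M be a dominating set of G. Define D = M ∪ ⋃_{u∈M} P(u), where P(u) is the set of parents of u over all forests. Then the sets {S_v : v ∈ D}, with S_v = {v} ∪ C(v), cover V(G), and |D| ≤ (f+1)|M|. -/
open Finset

/-- if `M` is a dominating set of `G` and `D = M ∪ ⋃_{u ∈ M} P(u)`
(`P(u)` = parents of `u` over the `f` forests of a forest decomposition of `G`),
then the sets `S_v = {v} ∪ C(v)`, `v ∈ D`, cover `V(G)`, and `|D| ≤ (f+1)|M|`. -/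
theorem stmt_3 {V : Type*} [Fintype V] [DecidableEq V]
    (G : SimpleGraph V) (f : ℕ) (par : Fin f → V → Option V)
    -- the forests decompose the edge set: every edge is a parent-child edge in some forest
    (hdecomp : ∀ u v : V, G.Adj u v → ∃ i : Fin f, par i u = some v ∨ par i v = some u)
    (P S : V → Finset V)
    (hP : ∀ u : V, P u = univ.filter (fun p : V => ∃ i : Fin f, par i u = some p))
    (hS : ∀ v : V, S v = insert v (univ.filter (fun c : V => ∃ i : Fin f, par i c = some v)))
    (M : Finset V)
    (hM : ∀ w : V, w ∈ M ∨ ∃ u ∈ M, G.Adj u w)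
    (D : Finset V) (hD : D = M ∪ M.biUnion P) :
    (∀ w : V, ∃ v ∈ D, w ∈ S v) ∧ D.card ≤ (f + 1) * M.card := by
  have hPcard : ∀ u : V, (P u).card ≤ f := by
    intro u
    have hsub : P u ⊆ (univ : Finset (Fin f)).biUnion (fun i => (par i u).toFinset) := by
      intro p hp
      rw [hP] at hp
      obtain ⟨_, i, hi⟩ := mem_filter.mp hp
      exact mem_biUnion.mpr ⟨i, mem_univ i, by simp [hi]⟩
    calc (P u).card ≤ _ := card_le_card hsub
      _ ≤ ∑ i : Fin f, ((par i u).toFinset).card := card_biUnion_le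
      _ ≤ ∑ _i : Fin f, 1 := Finset.sum_le_sum (fun i _ => by cases par i u <;> simp)
      _ = f := by simp
  constructor
  · intro w
    rcases hM w with hw | ⟨u, hu, hadj⟩
    · exact ⟨w, by simp [hD, hw], by simp [hS]⟩
    · rcases hdecomp u w hadj with ⟨i, hi | hi⟩
      · refine ⟨w, ?_, by simp [hS]⟩
        rw [hD]
        exact mem_union_right _ (mem_biUnion.mpr ⟨u, hu, by rw [hP]; exact mem_filter.mpr ⟨mem_univ _, i, hi⟩⟩)
      · exact ⟨u, by simp [hD, hu], by rw [hS]; exact mem_insert_of_mem (mem_filter.mpr ⟨mem_univ _, i, hi⟩)⟩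
  · calc D.card ≤ M.card + (M.biUnion P).card := by rw [hD]; exact card_union_le _ _
      _ ≤ M.card + ∑ u ∈ M, (P u).card := by gcongr; exact card_biUnion_le
      _ ≤ M.card + ∑ _u ∈ M, f := by gcongr with u hu; exact hPcard u
      _ = (f + 1) * M.card := by simp [Finset.sum_const]; ring
end

section
/- Let G be a graph admitting a forest decomposition into f rooted forests, and suppose a set D ⊆ V(G) satisfies ⋃_{v∈D} S_v = V(G) and |D| ≤ c · |S*| where S* is a minimum cardinality subfamily of {S_u : u ∈ V(G)} covering V(G), i.e. D is a c-approximate set cover. Then D is a dominating set of G of size at most c·(f+1) times the size of a minimum dominating set of G. -/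
open Finset

/-- if `D` is a `c`-approximate set cover of the instance with sets
`S_u = {u} ∪ C(u)` coming from a forest decomposition of `G` into `f` rooted
forests, then `D` is a dominating set of `G` of size at most `c·(f+1)` times
the size of a minimum dominating set of `G`. -/
theorem stmt_4 {V : Type*} [Fintype V] [DecidableEq V]
    (G : SimpleGraph V) (f : ℕ) (par : Fin f → V → Option V)
    (hchild : ∀ (i : Fin f) (c p : V), par i c = some p → G.Adj p c)
    (hdecomp : ∀ u v : V, G.Adj u v → ∃ i : Fin f, par i u = some v ∨ par i v = some u)
    (S : V → Finset V)
    (hS : ∀ v : V, S v = insert v (univ.filter (fun c : V => ∃ i : Fin f, par i c = some v)))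
    (c : ℕ) (D : Finset V)
    (hDcover : ∀ w : V, ∃ v ∈ D, w ∈ S v)
    -- D is a c-approximation of a minimum set cover S* of the instance
    (hDapprox : ∃ Sstar : Finset V, (∀ w : V, ∃ v ∈ Sstar, w ∈ S v) ∧
      (∀ A : Finset V, (∀ w : V, ∃ v ∈ A, w ∈ S v) → Sstar.card ≤ A.card) ∧
      D.card ≤ c * Sstar.card)
    -- M is a minimum dominating set of G
    (M : Finset V)
    (hM : ∀ w : V, w ∈ M ∨ ∃ u ∈ M, G.Adj u w)
    (hMmin : ∀ M' : Finset V, (∀ w : V, w ∈ M' ∨ ∃ u ∈ M', G.Adj u w) → M.card ≤ M'.card) :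
    (∀ w : V, w ∈ D ∨ ∃ v ∈ D, G.Adj v w) ∧ D.card ≤ c * (f + 1) * M.card := by

  constructor
  · intro w
    obtain ⟨v, hv, hw⟩ := hDcover w
    rw [hS] at hw
    rcases Finset.mem_insert.mp hw with h | h
    · exact .inl (h ▸ hv)
    · obtain ⟨i, hi⟩ := (Finset.mem_filter.mp h).2
      exact .inr ⟨v, hv, hchild i w v hi⟩
  · obtain ⟨Sstar, _, hmin, hle⟩ := hDapprox
    set A : Finset V := M ∪ M.biUnion (fun m =>
      (univ : Finset (Fin f)).biUnion (fun i => (par i m).toFinset)) with hA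
    have hAcover : ∀ w : V, ∃ v ∈ A, w ∈ S v := by
      intro w
      rcases hM w with hw | ⟨u, hu, hadj⟩
      · exact ⟨w, Finset.mem_union_left _ hw, by rw [hS]; exact Finset.mem_insert_self _ _⟩
      · obtain ⟨i, hi | hi⟩ := hdecomp u w hadj
        · refine ⟨w, Finset.mem_union_right _ ?_, by rw [hS]; exact Finset.mem_insert_self _ _⟩
          refine Finset.mem_biUnion.mpr ⟨u, hu, Finset.mem_biUnion.mpr ⟨i, Finset.mem_univ i, ?_⟩⟩
          simp [hi]
        · refine ⟨u, Finset.mem_union_left _ hu, ?_⟩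
          rw [hS]
          exact Finset.mem_insert_of_mem (Finset.mem_filter.mpr ⟨Finset.mem_univ _, ⟨i, hi⟩⟩)
    have hAcard : A.card ≤ (f + 1) * M.card := by
      calc A.card ≤ M.card + (M.biUnion (fun m =>
            (univ : Finset (Fin f)).biUnion (fun i => (par i m).toFinset))).card :=
            Finset.card_union_le _ _
        _ ≤ M.card + ∑ m ∈ M, ((univ : Finset (Fin f)).biUnion
              (fun i => (par i m).toFinset)).card := by
            gcongr; exact Finset.card_biUnion_le
        _ ≤ M.card + ∑ m ∈ M, f := by
            gcongr with m hm
            calc ((univ : Finset (Fin f)).biUnion (fun i => (par i m).toFinset)).card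
                ≤ ∑ i : Fin f, ((par i m).toFinset).card := Finset.card_biUnion_le
              _ ≤ ∑ i : Fin f, 1 := by gcongr with i; cases par i m <;> simp
              _ = f := by simp
        _ = (f + 1) * M.card := by simp [Finset.sum_const, smul_eq_mul]; ring
    calc D.card ≤ c * Sstar.card := hle
      _ ≤ c * A.card := Nat.mul_le_mul_left c (hmin A hAcover)
      _ ≤ c * ((f + 1) * M.card) := by gcongr
      _ = c * (f + 1) * M.card := by ring
end

section
/- Let G have arboricity at most α with a decomposition into f ≤ 3α rooted forests, and let γ(G) be its domination number. Then the set-cover instance with sets S_u = {u} ∪ C(u) (children over all forests) has a cover of size at most (3α + 1)·γ(G); consequently an α'-approximate set cover of this instance gives a dominating set of G of size at most α'(3α+1)·γ(G). -/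
open Finset

/-- with a decomposition into `f ≤ 3α` rooted forests of a graph
`G` of arboricity at most `α`, the set-cover instance with sets
`S_u = {u} ∪ C(u)` has a cover of size at most `(3α+1)·γ(G)`, and any
`α'`-approximate set cover yields a dominating set of size at most
`α'·(3α+1)·γ(G)` (here `M` is a minimum dominating set, `γ(G) = |M|`). -/
theorem stmt_14 {V : Type*} [Fintype V] [DecidableEq V]
    (G : SimpleGraph V) (α f : ℕ) (hf : f ≤ 3 * α)
    (par : Fin f → V → Option V)
    (hchild : ∀ (i : Fin f) (c p : V), par i c = some p → G.Adj p c)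
    (hdecomp : ∀ u v : V, G.Adj u v → ∃ i : Fin f, par i u = some v ∨ par i v = some u)
    (S : V → Finset V)
    (hS : ∀ v : V, S v = insert v (univ.filter (fun c : V => ∃ i : Fin f, par i c = some v)))
    (M : Finset V)
    (hM : ∀ w : V, w ∈ M ∨ ∃ u ∈ M, G.Adj u w)
    (hMmin : ∀ M' : Finset V, (∀ w : V, w ∈ M' ∨ ∃ u ∈ M', G.Adj u w) → M.card ≤ M'.card) :
    (∃ D : Finset V, (∀ w : V, ∃ v ∈ D, w ∈ S v) ∧ D.card ≤ (3 * α + 1) * M.card) ∧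
    (∀ (α' : ℕ) (D' : Finset V),
      (∀ w : V, ∃ v ∈ D', w ∈ S v) →
      (∀ A : Finset V, (∀ w : V, ∃ v ∈ A, w ∈ S v) → D'.card ≤ α' * A.card) →
      (∀ w : V, w ∈ D' ∨ ∃ v ∈ D', G.Adj v w) ∧
        D'.card ≤ α' * (3 * α + 1) * M.card) := by
  classical
  -- D = M together with all parents of members of M
  set D : Finset V :=
    M.biUnion (fun u => insert u ((Finset.univ : Finset (Fin f)).biUnion
      (fun i => (par i u).toFinset))) with hD
  have hcover : ∀ w : V, ∃ v ∈ D, w ∈ S v := by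
    intro w
    rcases hM w with hw | ⟨u, hu, hadj⟩
    · refine ⟨w, ?_, ?_⟩
      · simp [hD]
        exact ⟨w, hw, Or.inl rfl⟩
      · rw [hS]; exact mem_insert_self _ _
    · rcases hdecomp u w hadj with ⟨i, hi | hi⟩
      · -- w is a parent of u
        refine ⟨w, ?_, ?_⟩
        · simp only [hD, mem_biUnion]
          exact ⟨u, hu, by simp; exact Or.inr ⟨i, hi⟩⟩
        · rw [hS]; exact mem_insert_self _ _
      · -- u is a parent of w : w ∈ S u
        refine ⟨u, ?_, ?_⟩
        · simp only [hD, mem_biUnion]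
          exact ⟨u, hu, mem_insert_self _ _⟩
        · rw [hS]
          exact mem_insert_of_mem (by simp; exact ⟨i, hi⟩)
  have hcard : D.card ≤ (3 * α + 1) * M.card := by
    calc D.card ≤ ∑ u ∈ M, (insert u ((Finset.univ : Finset (Fin f)).biUnion
          (fun i => (par i u).toFinset))).card := Finset.card_biUnion_le
      _ ≤ ∑ u ∈ M, (3 * α + 1) := by
          refine Finset.sum_le_sum fun u _ => ?_
          calc (insert u ((Finset.univ : Finset (Fin f)).biUnion
                (fun i => (par i u).toFinset))).card
              ≤ ((Finset.univ : Finset (Fin f)).biUnion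
                (fun i => (par i u).toFinset)).card + 1 := Finset.card_insert_le _ _
            _ ≤ (∑ _i : Fin f, 1) + 1 := by
                have := Finset.card_biUnion_le (s := (Finset.univ : Finset (Fin f)))
                  (t := fun i => (par i u).toFinset)
                refine Nat.add_le_add_right (this.trans ?_) 1
                refine Finset.sum_le_sum fun i _ => ?_
                cases par i u <;> simp
            _ = f + 1 := by simp
            _ ≤ 3 * α + 1 := Nat.add_le_add_right hf 1
      _ = (3 * α + 1) * M.card := by rw [Finset.sum_const, smul_eq_mul, mul_comm]
  refine ⟨⟨D, hcover, hcard⟩, ?_⟩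
  intro α' D' hcov' happrox
  constructor
  · intro w
    rcases hcov' w with ⟨v, hv, hw⟩
    rw [hS] at hw
    rcases Finset.mem_insert.mp hw with rfl | hw
    · exact Or.inl hv
    · simp only [mem_filter] at hw
      rcases hw.2 with ⟨i, hi⟩
      exact Or.inr ⟨v, hv, hchild i w v hi⟩
  · calc D'.card ≤ α' * D.card := happrox D hcover
      _ ≤ α' * ((3 * α + 1) * M.card) := Nat.mul_le_mul_left _ hcard
      _ = α' * (3 * α + 1) * M.card := by ring
end
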